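/- The quotient group Γ₂²(2,4)/Γ₂(2,4) is isomorphic to (ℤ/2)³; in particular Γ₂(2,4) has index 8 in Γ₂²(2,4). -/
import Mathlib

open Matrix

abbrev Sp2 := Matrix.symplecticGroup (Fin 2) ℤ
abbrev Mat4 := Matrix (Fin 2 ⊕ Fin 2) (Fin 2 ⊕ Fin 2) ℤ

lemma mul_entry (M N : Mat4) (i j : Fin 2 ⊕ Fin 2) :
    (M * N) i j =
      M i (Sum.inl 0) * N (Sum.inl 0) j + M i (Sum.inl 1) * N (Sum.inl 1) j +
      M i (Sum.inr 0) * N (Sum.inr 0) j + M i (Sum.inr 1) * N (Sum.inr 1) j := by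
  simp [Matrix.mul_apply, Fintype.sum_sum_type, Fin.sum_univ_two]; ring

lemma coe_mul_sp (γ δ : Sp2) : ((γ * δ : Sp2) : Mat4) = (γ : Mat4) * (δ : Mat4) := rfl

lemma inv_ll (γ : Sp2) (i j : Fin 2) :
    ((γ⁻¹ : Sp2) : Mat4) (Sum.inl i) (Sum.inl j) = (γ : Mat4) (Sum.inr j) (Sum.inr i) := by
  rw [SymplecticGroup.coe_inv]
  simp [Matrix.J, Matrix.mul_apply, Fintype.sum_sum_type, Fin.sum_univ_two,
    Matrix.fromBlocks, Matrix.one_apply]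

lemma inv_lr (γ : Sp2) (i j : Fin 2) :
    ((γ⁻¹ : Sp2) : Mat4) (Sum.inl i) (Sum.inr j) = -(γ : Mat4) (Sum.inl j) (Sum.inr i) := by
  rw [SymplecticGroup.coe_inv]
  simp [Matrix.J, Matrix.mul_apply, Fintype.sum_sum_type, Fin.sum_univ_two,
    Matrix.fromBlocks, Matrix.one_apply]

lemma inv_rl (γ : Sp2) (i j : Fin 2) :
    ((γ⁻¹ : Sp2) : Mat4) (Sum.inr i) (Sum.inl j) = -(γ : Mat4) (Sum.inr j) (Sum.inl i) := by
  rw [SymplecticGroup.coe_inv]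
  simp [Matrix.J, Matrix.mul_apply, Fintype.sum_sum_type, Fin.sum_univ_two,
    Matrix.fromBlocks, Matrix.one_apply]

lemma inv_rr (γ : Sp2) (i j : Fin 2) :
    ((γ⁻¹ : Sp2) : Mat4) (Sum.inr i) (Sum.inr j) = (γ : Mat4) (Sum.inl j) (Sum.inl i) := by
  rw [SymplecticGroup.coe_inv]
  simp [Matrix.J, Matrix.mul_apply, Fintype.sum_sum_type, Fin.sum_univ_two,
    Matrix.fromBlocks, Matrix.one_apply]

lemma rel_entry (γ : Sp2) (r c : Fin 2 ⊕ Fin 2) :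
    ((γ : Mat4) * Matrix.J (Fin 2) ℤ * (γ : Mat4)ᵀ) r c = Matrix.J (Fin 2) ℤ r c := by
  rw [SymplecticGroup.mem_iff.mp γ.2]

lemma rel1 (γ : Sp2) :
    ((γ : Mat4) (Sum.inl 0) (Sum.inl 0)) * ((γ : Mat4) (Sum.inl 1) (Sum.inr 0)) + ((γ : Mat4) (Sum.inl 0) (Sum.inl 1)) * ((γ : Mat4) (Sum.inl 1) (Sum.inr 1)) - (((γ : Mat4) (Sum.inl 0) (Sum.inr 0)) * ((γ : Mat4) (Sum.inl 1) (Sum.inl 0)) + ((γ : Mat4) (Sum.inl 0) (Sum.inr 1)) * ((γ : Mat4) (Sum.inl 1) (Sum.inl 1))) = 0 := by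
  have h := rel_entry γ (Sum.inl 0) (Sum.inl 1)
  simp [Matrix.J, mul_entry, Matrix.fromBlocks, Matrix.one_apply] at h
  linarith

lemma rel2 (γ : Sp2) :
    ((γ : Mat4) (Sum.inl 0) (Sum.inl 0)) * ((γ : Mat4) (Sum.inr 1) (Sum.inr 0)) + ((γ : Mat4) (Sum.inl 0) (Sum.inl 1)) * ((γ : Mat4) (Sum.inr 1) (Sum.inr 1)) - (((γ : Mat4) (Sum.inl 0) (Sum.inr 0)) * ((γ : Mat4) (Sum.inr 1) (Sum.inl 0)) + ((γ : Mat4) (Sum.inl 0) (Sum.inr 1)) * ((γ : Mat4) (Sum.inr 1) (Sum.inl 1))) = 0 := by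
  have h := rel_entry γ (Sum.inl 0) (Sum.inr 1)
  simp [Matrix.J, mul_entry, Matrix.fromBlocks, Matrix.one_apply] at h
  linarith

lemma rel3 (γ : Sp2) :
    ((γ : Mat4) (Sum.inl 1) (Sum.inl 0)) * ((γ : Mat4) (Sum.inr 0) (Sum.inr 0)) + ((γ : Mat4) (Sum.inl 1) (Sum.inl 1)) * ((γ : Mat4) (Sum.inr 0) (Sum.inr 1)) - (((γ : Mat4) (Sum.inl 1) (Sum.inr 0)) * ((γ : Mat4) (Sum.inr 0) (Sum.inl 0)) + ((γ : Mat4) (Sum.inl 1) (Sum.inr 1)) * ((γ : Mat4) (Sum.inr 0) (Sum.inl 1))) = 0 := by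
  have h := rel_entry γ (Sum.inl 1) (Sum.inr 0)
  simp [Matrix.J, mul_entry, Matrix.fromBlocks, Matrix.one_apply] at h
  linarith

lemma one4_ll (i j : Fin 2) :
    (1 : Mat4) (Sum.inl i) (Sum.inl j) = (1 : Matrix (Fin 2) (Fin 2) ℤ) i j := by
  simp [Matrix.one_apply]

lemma one4_rr (i j : Fin 2) :
    (1 : Mat4) (Sum.inr i) (Sum.inr j) = (1 : Matrix (Fin 2) (Fin 2) ℤ) i j := by
  simp [Matrix.one_apply]

lemma one4_lr (i j : Fin 2) : (1 : Mat4) (Sum.inl i) (Sum.inr j) = 0 := by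
  simp [Matrix.one_apply]

lemma one4_rl (i j : Fin 2) : (1 : Mat4) (Sum.inr i) (Sum.inl j) = 0 := by
  simp [Matrix.one_apply]

lemma m1_00 : (1 : Matrix (Fin 2) (Fin 2) ℤ) 0 0 = 1 := by simp
lemma m1_01 : (1 : Matrix (Fin 2) (Fin 2) ℤ) 0 1 = 0 := by simp [Matrix.one_apply]
lemma m1_10 : (1 : Matrix (Fin 2) (Fin 2) ℤ) 1 0 = 0 := by simp [Matrix.one_apply]
lemma m1_11 : (1 : Matrix (Fin 2) (Fin 2) ℤ) 1 1 = 1 := by simp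

lemma one_symm (i j : Fin 2) :
    (1 : Matrix (Fin 2) (Fin 2) ℤ) i j = (1 : Matrix (Fin 2) (Fin 2) ℤ) j i := by
  simp [Matrix.one_apply, eq_comm]

def GSet : Set Sp2 :=
  {γ : Matrix.symplecticGroup (Fin 2) ℤ |
  (∀ i j : Fin 2, (2 : ℤ) ∣
    ((γ : Matrix (Fin 2 ⊕ Fin 2) (Fin 2 ⊕ Fin 2) ℤ) (Sum.inl i) (Sum.inl j)
      - (1 : Matrix (Fin 2) (Fin 2) ℤ) i j)) ∧
  (∀ i j : Fin 2, (2 : ℤ) ∣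
    ((γ : Matrix (Fin 2 ⊕ Fin 2) (Fin 2 ⊕ Fin 2) ℤ) (Sum.inr i) (Sum.inr j)
      - (1 : Matrix (Fin 2) (Fin 2) ℤ) i j)) ∧
  (∀ i j : Fin 2, (2 : ℤ) ∣
    (γ : Matrix (Fin 2 ⊕ Fin 2) (Fin 2 ⊕ Fin 2) ℤ) (Sum.inr i) (Sum.inl j)) ∧
  (∀ i : Fin 2, (4 : ℤ) ∣
    2 * (γ : Matrix (Fin 2 ⊕ Fin 2) (Fin 2 ⊕ Fin 2) ℤ) (Sum.inl i) (Sum.inr i)) ∧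
  (∀ i : Fin 2, (4 : ℤ) ∣
    (γ : Matrix (Fin 2 ⊕ Fin 2) (Fin 2 ⊕ Fin 2) ℤ) (Sum.inr i) (Sum.inl i))}

def HSet : Set Sp2 :=
  {γ : Matrix.symplecticGroup (Fin 2) ℤ |
  (∀ i j, (2 : ℤ) ∣
    ((γ : Matrix (Fin 2 ⊕ Fin 2) (Fin 2 ⊕ Fin 2) ℤ) i j
      - (1 : Matrix (Fin 2 ⊕ Fin 2) (Fin 2 ⊕ Fin 2) ℤ) i j)) ∧
  (∀ i : Fin 2, (4 : ℤ) ∣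
    (γ : Matrix (Fin 2 ⊕ Fin 2) (Fin 2 ⊕ Fin 2) ℤ) (Sum.inl i) (Sum.inr i)) ∧
  (∀ i : Fin 2, (4 : ℤ) ∣
    (γ : Matrix (Fin 2 ⊕ Fin 2) (Fin 2 ⊕ Fin 2) ℤ) (Sum.inr i) (Sum.inl i))}

lemma GP_elim {x : Sp2} (hx : x ∈ GSet) :
    ∃ xA0 xA1 xA2 xA3 xB0 xB1 xC0 xC1 xC2 xC3 xD0 xD1 xD2 xD3 : ℤ,
      ((x : Mat4) (Sum.inl 0) (Sum.inl 0)) = 1 + 2 * xA0 ∧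
      ((x : Mat4) (Sum.inl 0) (Sum.inl 1)) = 2 * xA1 ∧
      ((x : Mat4) (Sum.inl 1) (Sum.inl 0)) = 2 * xA2 ∧
      ((x : Mat4) (Sum.inl 1) (Sum.inl 1)) = 1 + 2 * xA3 ∧
      ((x : Mat4) (Sum.inl 0) (Sum.inr 0)) = 2 * xB0 ∧
      ((x : Mat4) (Sum.inl 1) (Sum.inr 1)) = 2 * xB1 ∧
      ((x : Mat4) (Sum.inr 0) (Sum.inl 0)) = 4 * xC0 ∧
      ((x : Mat4) (Sum.inr 0) (Sum.inl 1)) = 2 * xC1 ∧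
      ((x : Mat4) (Sum.inr 1) (Sum.inl 0)) = 2 * xC2 ∧
      ((x : Mat4) (Sum.inr 1) (Sum.inl 1)) = 4 * xC3 ∧
      ((x : Mat4) (Sum.inr 0) (Sum.inr 0)) = 1 + 2 * xD0 ∧
      ((x : Mat4) (Sum.inr 0) (Sum.inr 1)) = 2 * xD1 ∧
      ((x : Mat4) (Sum.inr 1) (Sum.inr 0)) = 2 * xD2 ∧
      ((x : Mat4) (Sum.inr 1) (Sum.inr 1)) = 1 + 2 * xD3 := by
  obtain ⟨hA, hD, hC, hB2, hC4⟩ := hx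
  have m00 : (1 : Matrix (Fin 2) (Fin 2) ℤ) 0 0 = 1 := by norm_num
  have m01 : (1 : Matrix (Fin 2) (Fin 2) ℤ) 0 1 = 0 := by norm_num [Matrix.one_apply]
  have m10 : (1 : Matrix (Fin 2) (Fin 2) ℤ) 1 0 = 0 := by norm_num [Matrix.one_apply]
  have m11 : (1 : Matrix (Fin 2) (Fin 2) ℤ) 1 1 = 1 := by norm_num
  obtain ⟨kA0, hkA0⟩ := hA 0 0
  obtain ⟨kA1, hkA1⟩ := hA 0 1
  obtain ⟨kA2, hkA2⟩ := hA 1 0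
  obtain ⟨kA3, hkA3⟩ := hA 1 1
  obtain ⟨kB0, hkB0⟩ := hB2 0
  obtain ⟨kB1, hkB1⟩ := hB2 1
  obtain ⟨kC0, hkC0⟩ := hC4 0
  obtain ⟨kC1, hkC1⟩ := hC 0 1
  obtain ⟨kC2, hkC2⟩ := hC 1 0
  obtain ⟨kC3, hkC3⟩ := hC4 1
  obtain ⟨kD0, hkD0⟩ := hD 0 0
  obtain ⟨kD1, hkD1⟩ := hD 0 1
  obtain ⟨kD2, hkD2⟩ := hD 1 0
  obtain ⟨kD3, hkD3⟩ := hD 1 1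
  rw [m00] at hkA0 hkD0
  rw [m01] at hkA1 hkD1
  rw [m10] at hkA2 hkD2
  rw [m11] at hkA3 hkD3
  exact ⟨kA0, kA1, kA2, kA3, kB0, kB1, kC0, kC1, kC2, kC3, kD0, kD1, kD2, kD3,
    by omega, by omega, by omega, by omega, by omega, by omega, by omega,
    by omega, by omega, by omega, by omega, by omega, by omega, by omega⟩

lemma sym1 {x : Sp2} (hx : x ∈ GSet) :
    (2 : ℤ) ∣ ((x : Mat4) (Sum.inl 1) (Sum.inr 0)) - ((x : Mat4) (Sum.inl 0) (Sum.inr 1)) := by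
  obtain ⟨xA0, xA1, xA2, xA3, xB0, xB1, xC0, xC1, xC2, xC3, xD0, xD1, xD2, xD3, hxA0, hxA1, hxA2, hxA3, hxB0, hxB1, hxC0, hxC1, hxC2, hxC3, hxD0, hxD1, hxD2, hxD3⟩ := GP_elim hx
  have h1 := rel1 x
  simp only [hxA0, hxA1, hxA2, hxA3, hxB0, hxB1, hxC0, hxC1, hxC2, hxC3, hxD0, hxD1, hxD2, hxD3] at h1
  exact ⟨(1) * ((x : Mat4) (Sum.inl 0) (Sum.inr 1)) * xA3 + (-1) * ((x : Mat4) (Sum.inl 1) (Sum.inr 0)) * xA0 + (-2) * xA1 * xB1 + (2) * xA2 * xB0, by linear_combination h1⟩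

lemma sym2 {x : Sp2} (hx : x ∈ GSet) :
    (4 : ℤ) ∣ ((x : Mat4) (Sum.inl 0) (Sum.inl 1)) + ((x : Mat4) (Sum.inr 1) (Sum.inr 0)) := by
  obtain ⟨xA0, xA1, xA2, xA3, xB0, xB1, xC0, xC1, xC2, xC3, xD0, xD1, xD2, xD3, hxA0, hxA1, hxA2, hxA3, hxB0, hxB1, hxC0, hxC1, hxC2, hxC3, hxD0, hxD1, hxD2, hxD3⟩ := GP_elim hx
  have h1 := rel2 x
  simp only [hxA0, hxA1, hxA2, hxA3, hxB0, hxB1, hxC0, hxC1, hxC2, hxC3, hxD0, hxD1, hxD2, hxD3] at h1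
  refine ⟨(1) * ((x : Mat4) (Sum.inl 0) (Sum.inr 1)) * xC3 + (-1) * xA0 * xD2 + (-1) * xA1 * xD3 + (1) * xB0 * xC2, ?_⟩
  rw [hxA1, hxD2]
  linear_combination h1

lemma sym3 {x : Sp2} (hx : x ∈ GSet) :
    (4 : ℤ) ∣ ((x : Mat4) (Sum.inl 1) (Sum.inl 0)) + ((x : Mat4) (Sum.inr 0) (Sum.inr 1)) := by
  obtain ⟨xA0, xA1, xA2, xA3, xB0, xB1, xC0, xC1, xC2, xC3, xD0, xD1, xD2, xD3, hxA0, hxA1, hxA2, hxA3, hxB0, hxB1, hxC0, hxC1, hxC2, hxC3, hxD0, hxD1, hxD2, hxD3⟩ := GP_elim hx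
  have h1 := rel3 x
  simp only [hxA0, hxA1, hxA2, hxA3, hxB0, hxB1, hxC0, hxC1, hxC2, hxC3, hxD0, hxD1, hxD2, hxD3] at h1
  refine ⟨(1) * ((x : Mat4) (Sum.inl 1) (Sum.inr 0)) * xC0 + (-1) * xA2 * xD0 + (-1) * xA3 * xD1 + (1) * xB1 * xC1, ?_⟩
  rw [hxA2, hxD1]
  linear_combination h1

lemma GP_mul {x y : Sp2} (hx : x ∈ GSet) (hy : y ∈ GSet) : x * y ∈ GSet := by
  obtain ⟨xA0, xA1, xA2, xA3, xB0, xB1, xC0, xC1, xC2, xC3, xD0, xD1, xD2, xD3, hxA0, hxA1, hxA2, hxA3, hxB0, hxB1, hxC0, hxC1, hxC2, hxC3, hxD0, hxD1, hxD2, hxD3⟩ := GP_elim hx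
  obtain ⟨yA0, yA1, yA2, yA3, yB0, yB1, yC0, yC1, yC2, yC3, yD0, yD1, yD2, yD3, hyA0, hyA1, hyA2, hyA3, hyB0, hyB1, hyC0, hyC1, hyC2, hyC3, hyD0, hyD1, hyD2, hyD3⟩ := GP_elim hy
  have kA00 : (2 : ℤ) ∣ ((x * y : Sp2) : Mat4) (Sum.inl 0) (Sum.inl 0) - 1 := by
    simp only [coe_mul_sp, mul_entry, hxA0, hxA1, hxA2, hxA3, hxB0, hxB1, hxC0, hxC1, hxC2, hxC3, hxD0, hxD1, hxD2, hxD3, hyA0, hyA1, hyA2, hyA3, hyB0, hyB1, hyC0, hyC1, hyC2, hyC3, hyD0, hyD1, hyD2, hyD3]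
    exact ⟨(1) * ((x : Mat4) (Sum.inl 0) (Sum.inr 1)) * yC2 + (1) * xA0 + (2) * xA0 * yA0 + (2) * xA1 * yA2 + (4) * xB0 * yC0 + (1) * yA0, by ring⟩
  have kA01 : (2 : ℤ) ∣ ((x * y : Sp2) : Mat4) (Sum.inl 0) (Sum.inl 1) - 0 := by
    simp only [coe_mul_sp, mul_entry, hxA0, hxA1, hxA2, hxA3, hxB0, hxB1, hxC0, hxC1, hxC2, hxC3, hxD0, hxD1, hxD2, hxD3, hyA0, hyA1, hyA2, hyA3, hyB0, hyB1, hyC0, hyC1, hyC2, hyC3, hyD0, hyD1, hyD2, hyD3]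
    exact ⟨(2) * ((x : Mat4) (Sum.inl 0) (Sum.inr 1)) * yC3 + (2) * xA0 * yA1 + (1) * xA1 + (2) * xA1 * yA3 + (2) * xB0 * yC1 + (1) * yA1, by ring⟩
  have kA10 : (2 : ℤ) ∣ ((x * y : Sp2) : Mat4) (Sum.inl 1) (Sum.inl 0) - 0 := by
    simp only [coe_mul_sp, mul_entry, hxA0, hxA1, hxA2, hxA3, hxB0, hxB1, hxC0, hxC1, hxC2, hxC3, hxD0, hxD1, hxD2, hxD3, hyA0, hyA1, hyA2, hyA3, hyB0, hyB1, hyC0, hyC1, hyC2, hyC3, hyD0, hyD1, hyD2, hyD3]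
    exact ⟨(2) * ((x : Mat4) (Sum.inl 1) (Sum.inr 0)) * yC0 + (1) * xA2 + (2) * xA2 * yA0 + (2) * xA3 * yA2 + (2) * xB1 * yC2 + (1) * yA2, by ring⟩
  have kA11 : (2 : ℤ) ∣ ((x * y : Sp2) : Mat4) (Sum.inl 1) (Sum.inl 1) - 1 := by
    simp only [coe_mul_sp, mul_entry, hxA0, hxA1, hxA2, hxA3, hxB0, hxB1, hxC0, hxC1, hxC2, hxC3, hxD0, hxD1, hxD2, hxD3, hyA0, hyA1, hyA2, hyA3, hyB0, hyB1, hyC0, hyC1, hyC2, hyC3, hyD0, hyD1, hyD2, hyD3]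
    exact ⟨(1) * ((x : Mat4) (Sum.inl 1) (Sum.inr 0)) * yC1 + (2) * xA2 * yA1 + (1) * xA3 + (2) * xA3 * yA3 + (4) * xB1 * yC3 + (1) * yA3, by ring⟩
  have kD00 : (2 : ℤ) ∣ ((x * y : Sp2) : Mat4) (Sum.inr 0) (Sum.inr 0) - 1 := by
    simp only [coe_mul_sp, mul_entry, hxA0, hxA1, hxA2, hxA3, hxB0, hxB1, hxC0, hxC1, hxC2, hxC3, hxD0, hxD1, hxD2, hxD3, hyA0, hyA1, hyA2, hyA3, hyB0, hyB1, hyC0, hyC1, hyC2, hyC3, hyD0, hyD1, hyD2, hyD3]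
    exact ⟨(1) * ((y : Mat4) (Sum.inl 1) (Sum.inr 0)) * xC1 + (4) * xC0 * yB0 + (1) * xD0 + (2) * xD0 * yD0 + (2) * xD1 * yD2 + (1) * yD0, by ring⟩
  have kD01 : (2 : ℤ) ∣ ((x * y : Sp2) : Mat4) (Sum.inr 0) (Sum.inr 1) - 0 := by
    simp only [coe_mul_sp, mul_entry, hxA0, hxA1, hxA2, hxA3, hxB0, hxB1, hxC0, hxC1, hxC2, hxC3, hxD0, hxD1, hxD2, hxD3, hyA0, hyA1, hyA2, hyA3, hyB0, hyB1, hyC0, hyC1, hyC2, hyC3, hyD0, hyD1, hyD2, hyD3]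
    exact ⟨(2) * ((y : Mat4) (Sum.inl 0) (Sum.inr 1)) * xC0 + (2) * xC1 * yB1 + (2) * xD0 * yD1 + (1) * xD1 + (2) * xD1 * yD3 + (1) * yD1, by ring⟩
  have kD10 : (2 : ℤ) ∣ ((x * y : Sp2) : Mat4) (Sum.inr 1) (Sum.inr 0) - 0 := by
    simp only [coe_mul_sp, mul_entry, hxA0, hxA1, hxA2, hxA3, hxB0, hxB1, hxC0, hxC1, hxC2, hxC3, hxD0, hxD1, hxD2, hxD3, hyA0, hyA1, hyA2, hyA3, hyB0, hyB1, hyC0, hyC1, hyC2, hyC3, hyD0, hyD1, hyD2, hyD3]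
    exact ⟨(2) * ((y : Mat4) (Sum.inl 1) (Sum.inr 0)) * xC3 + (2) * xC2 * yB0 + (1) * xD2 + (2) * xD2 * yD0 + (2) * xD3 * yD2 + (1) * yD2, by ring⟩
  have kD11 : (2 : ℤ) ∣ ((x * y : Sp2) : Mat4) (Sum.inr 1) (Sum.inr 1) - 1 := by
    simp only [coe_mul_sp, mul_entry, hxA0, hxA1, hxA2, hxA3, hxB0, hxB1, hxC0, hxC1, hxC2, hxC3, hxD0, hxD1, hxD2, hxD3, hyA0, hyA1, hyA2, hyA3, hyB0, hyB1, hyC0, hyC1, hyC2, hyC3, hyD0, hyD1, hyD2, hyD3]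
    exact ⟨(1) * ((y : Mat4) (Sum.inl 0) (Sum.inr 1)) * xC2 + (4) * xC3 * yB1 + (2) * xD2 * yD1 + (1) * xD3 + (2) * xD3 * yD3 + (1) * yD3, by ring⟩
  have kC00 : (2 : ℤ) ∣ ((x * y : Sp2) : Mat4) (Sum.inr 0) (Sum.inl 0) := by
    simp only [coe_mul_sp, mul_entry, hxA0, hxA1, hxA2, hxA3, hxB0, hxB1, hxC0, hxC1, hxC2, hxC3, hxD0, hxD1, hxD2, hxD3, hyA0, hyA1, hyA2, hyA3, hyB0, hyB1, hyC0, hyC1, hyC2, hyC3, hyD0, hyD1, hyD2, hyD3]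
    exact ⟨(2) * xC0 + (4) * xC0 * yA0 + (2) * xC1 * yA2 + (4) * xD0 * yC0 + (2) * xD1 * yC2 + (2) * yC0, by ring⟩
  have kC01 : (2 : ℤ) ∣ ((x * y : Sp2) : Mat4) (Sum.inr 0) (Sum.inl 1) := by
    simp only [coe_mul_sp, mul_entry, hxA0, hxA1, hxA2, hxA3, hxB0, hxB1, hxC0, hxC1, hxC2, hxC3, hxD0, hxD1, hxD2, hxD3, hyA0, hyA1, hyA2, hyA3, hyB0, hyB1, hyC0, hyC1, hyC2, hyC3, hyD0, hyD1, hyD2, hyD3]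
    exact ⟨(4) * xC0 * yA1 + (1) * xC1 + (2) * xC1 * yA3 + (2) * xD0 * yC1 + (4) * xD1 * yC3 + (1) * yC1, by ring⟩
  have kC10 : (2 : ℤ) ∣ ((x * y : Sp2) : Mat4) (Sum.inr 1) (Sum.inl 0) := by
    simp only [coe_mul_sp, mul_entry, hxA0, hxA1, hxA2, hxA3, hxB0, hxB1, hxC0, hxC1, hxC2, hxC3, hxD0, hxD1, hxD2, hxD3, hyA0, hyA1, hyA2, hyA3, hyB0, hyB1, hyC0, hyC1, hyC2, hyC3, hyD0, hyD1, hyD2, hyD3]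
    exact ⟨(1) * xC2 + (2) * xC2 * yA0 + (4) * xC3 * yA2 + (4) * xD2 * yC0 + (2) * xD3 * yC2 + (1) * yC2, by ring⟩
  have kC11 : (2 : ℤ) ∣ ((x * y : Sp2) : Mat4) (Sum.inr 1) (Sum.inl 1) := by
    simp only [coe_mul_sp, mul_entry, hxA0, hxA1, hxA2, hxA3, hxB0, hxB1, hxC0, hxC1, hxC2, hxC3, hxD0, hxD1, hxD2, hxD3, hyA0, hyA1, hyA2, hyA3, hyB0, hyB1, hyC0, hyC1, hyC2, hyC3, hyD0, hyD1, hyD2, hyD3]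
    exact ⟨(2) * xC2 * yA1 + (2) * xC3 + (4) * xC3 * yA3 + (2) * xD2 * yC1 + (4) * xD3 * yC3 + (2) * yC3, by ring⟩
  have kB0 : (4 : ℤ) ∣ 2 * ((x * y : Sp2) : Mat4) (Sum.inl 0) (Sum.inr 0) := by
    simp only [coe_mul_sp, mul_entry, hxA0, hxA1, hxA2, hxA3, hxB0, hxB1, hxC0, hxC1, hxC2, hxC3, hxD0, hxD1, hxD2, hxD3, hyA0, hyA1, hyA2, hyA3, hyB0, hyB1, hyC0, hyC1, hyC2, hyC3, hyD0, hyD1, hyD2, hyD3]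
    exact ⟨(1) * ((x : Mat4) (Sum.inl 0) (Sum.inr 1)) * yD2 + (1) * ((y : Mat4) (Sum.inl 1) (Sum.inr 0)) * xA1 + (2) * xA0 * yB0 + (1) * xB0 + (2) * xB0 * yD0 + (1) * yB0, by ring⟩
  have kB1 : (4 : ℤ) ∣ 2 * ((x * y : Sp2) : Mat4) (Sum.inl 1) (Sum.inr 1) := by
    simp only [coe_mul_sp, mul_entry, hxA0, hxA1, hxA2, hxA3, hxB0, hxB1, hxC0, hxC1, hxC2, hxC3, hxD0, hxD1, hxD2, hxD3, hyA0, hyA1, hyA2, hyA3, hyB0, hyB1, hyC0, hyC1, hyC2, hyC3, hyD0, hyD1, hyD2, hyD3]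
    exact ⟨(1) * ((x : Mat4) (Sum.inl 1) (Sum.inr 0)) * yD1 + (1) * ((y : Mat4) (Sum.inl 0) (Sum.inr 1)) * xA2 + (2) * xA3 * yB1 + (1) * xB1 + (2) * xB1 * yD3 + (1) * yB1, by ring⟩
  have kF0 : (4 : ℤ) ∣ ((x * y : Sp2) : Mat4) (Sum.inr 0) (Sum.inl 0) := by
    simp only [coe_mul_sp, mul_entry, hxA0, hxA1, hxA2, hxA3, hxB0, hxB1, hxC0, hxC1, hxC2, hxC3, hxD0, hxD1, hxD2, hxD3, hyA0, hyA1, hyA2, hyA3, hyB0, hyB1, hyC0, hyC1, hyC2, hyC3, hyD0, hyD1, hyD2, hyD3]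
    exact ⟨(1) * xC0 + (2) * xC0 * yA0 + (1) * xC1 * yA2 + (2) * xD0 * yC0 + (1) * xD1 * yC2 + (1) * yC0, by ring⟩
  have kF1 : (4 : ℤ) ∣ ((x * y : Sp2) : Mat4) (Sum.inr 1) (Sum.inl 1) := by
    simp only [coe_mul_sp, mul_entry, hxA0, hxA1, hxA2, hxA3, hxB0, hxB1, hxC0, hxC1, hxC2, hxC3, hxD0, hxD1, hxD2, hxD3, hyA0, hyA1, hyA2, hyA3, hyB0, hyB1, hyC0, hyC1, hyC2, hyC3, hyD0, hyD1, hyD2, hyD3]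
    exact ⟨(1) * xC2 * yA1 + (1) * xC3 + (2) * xC3 * yA3 + (1) * xD2 * yC1 + (2) * xD3 * yC3 + (1) * yC3, by ring⟩
  refine ⟨?_, ?_, ?_, ?_, ?_⟩
  · intro i j
    fin_cases i <;> fin_cases j <;> first | exact kA00 | exact kA01 | exact kA10 | exact kA11
  · intro i j
    fin_cases i <;> fin_cases j <;> first | exact kD00 | exact kD01 | exact kD10 | exact kD11
  · intro i j
    fin_cases i <;> fin_cases j <;> first | exact kC00 | exact kC01 | exact kC10 | exact kC11
  · intro i
    fin_cases i <;> first | exact kB0 | exact kB1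
  · intro i
    fin_cases i <;> first | exact kF0 | exact kF1

lemma GP_one : (1 : Sp2) ∈ GSet := by
  have hc : ((1 : Sp2) : Mat4) = (1 : Mat4) := rfl
  refine ⟨?_, ?_, ?_, ?_, ?_⟩
  · intro i j
    simp [hc, one4_ll]
  · intro i j
    simp [hc, one4_rr]
  · intro i j
    simp [hc, one4_rl]
  · intro i
    simp [hc, one4_lr]
  · intro i
    simp [hc, one4_rl]

lemma GP_inv {x : Sp2} (hx : x ∈ GSet) : x⁻¹ ∈ GSet := by
  obtain ⟨hA, hD, hC, hB2, hC4⟩ := hx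
  refine ⟨?_, ?_, ?_, ?_, ?_⟩
  · intro i j
    rw [inv_ll, one_symm]
    exact hD j i
  · intro i j
    rw [inv_rr, one_symm]
    exact hA j i
  · intro i j
    rw [inv_rl]
    have h := hC j i
    omega
  · intro i
    rw [inv_lr]
    have h := hB2 i
    omega
  · intro i
    rw [inv_rl]
    have h := hC4 i
    omega

def GG : Subgroup Sp2 where
  carrier := GSet
  mul_mem' := GP_mul
  one_mem' := GP_one
  inv_mem' := GP_inv

def Xv (g : Sp2) : ℤ := ((g : Mat4) (Sum.inl 0) (Sum.inr 0)) + ((g : Mat4) (Sum.inl 0) (Sum.inl 1)) * ((g : Mat4) (Sum.inl 0) (Sum.inr 1))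
def Yv (g : Sp2) : ℤ := ((g : Mat4) (Sum.inl 1) (Sum.inr 1)) + ((g : Mat4) (Sum.inl 1) (Sum.inl 0)) * ((g : Mat4) (Sum.inl 0) (Sum.inr 1))
def Zv (g : Sp2) : ℤ := ((g : Mat4) (Sum.inl 0) (Sum.inr 1))

lemma Xv_even {x : Sp2} (hx : x ∈ GSet) : (2 : ℤ) ∣ Xv x := by
  obtain ⟨xA0, xA1, xA2, xA3, xB0, xB1, xC0, xC1, xC2, xC3, xD0, xD1, xD2, xD3, hxA0, hxA1, hxA2, hxA3, hxB0, hxB1, hxC0, hxC1, hxC2, hxC3, hxD0, hxD1, hxD2, hxD3⟩ := GP_elim hx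
  simp only [Xv, hxB0, hxA1]
  exact ⟨xB0 + xA1 * ((x : Mat4) (Sum.inl 0) (Sum.inr 1)), by ring⟩

lemma Yv_even {x : Sp2} (hx : x ∈ GSet) : (2 : ℤ) ∣ Yv x := by
  obtain ⟨xA0, xA1, xA2, xA3, xB0, xB1, xC0, xC1, xC2, xC3, xD0, xD1, xD2, xD3, hxA0, hxA1, hxA2, hxA3, hxB0, hxB1, hxC0, hxC1, hxC2, hxC3, hxD0, hxD1, hxD2, hxD3⟩ := GP_elim hx
  simp only [Yv, hxB1, hxA2]
  exact ⟨xB1 + xA2 * ((x : Mat4) (Sum.inl 0) (Sum.inr 1)), by ring⟩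

lemma keyX {x y : Sp2} (hx : x ∈ GSet) (hy : y ∈ GSet) :
    (4 : ℤ) ∣ Xv (x * y) - Xv x - Xv y := by
  obtain ⟨xA0, xA1, xA2, xA3, xB0, xB1, xC0, xC1, xC2, xC3, xD0, xD1, xD2, xD3, hxA0, hxA1, hxA2, hxA3, hxB0, hxB1, hxC0, hxC1, hxC2, hxC3, hxD0, hxD1, hxD2, hxD3⟩ := GP_elim hx
  obtain ⟨yA0, yA1, yA2, yA3, yB0, yB1, yC0, yC1, yC2, yC3, yD0, yD1, yD2, yD3, hyA0, hyA1, hyA2, hyA3, hyB0, hyB1, hyC0, hyC1, hyC2, hyC3, hyD0, hyD1, hyD2, hyD3⟩ := GP_elim hy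
  obtain ⟨T, hT⟩ := sym1 hy
  obtain ⟨S, hS⟩ := sym2 hy
  have hyd10 : ((y : Mat4) (Sum.inr 1) (Sum.inr 0)) = 4 * S - 2 * yA1 := by omega
  have hyb10 : ((y : Mat4) (Sum.inl 1) (Sum.inr 0)) = ((y : Mat4) (Sum.inl 0) (Sum.inr 1)) + 2 * T := by omega
  simp only [Xv, coe_mul_sp, mul_entry]
  simp only [hxA0, hxA1, hxA2, hxA3, hxB0, hxB1, hxC0, hxC1, hxC2, hxC3, hxD0, hxD1, hxD2, hxD3, hyA0, hyA1, hyA2, hyA3, hyB0, hyB1, hyC0, hyC1, hyC2, hyC3, hyD0, hyD1, hyD3, hyd10, hyb10]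
  exact ⟨(1) * ((x : Mat4) (Sum.inl 0) (Sum.inr 1)) * ((x : Mat4) (Sum.inl 0) (Sum.inr 1)) * yC3 + (2) * ((x : Mat4) (Sum.inl 0) (Sum.inr 1)) * ((x : Mat4) (Sum.inl 0) (Sum.inr 1)) * yC3 * yD3 + (2) * ((x : Mat4) (Sum.inl 0) (Sum.inr 1)) * ((y : Mat4) (Sum.inl 0) (Sum.inr 1)) * xA0 * yC3 + (1) * ((x : Mat4) (Sum.inl 0) (Sum.inr 1)) * ((y : Mat4) (Sum.inl 0) (Sum.inr 1)) * yC3 + (1) * ((x : Mat4) (Sum.inl 0) (Sum.inr 1)) * S + (1) * ((x : Mat4) (Sum.inl 0) (Sum.inr 1)) * xA0 * yA1 + (2) * ((x : Mat4) (Sum.inl 0) (Sum.inr 1)) * xA0 * yA1 * yD3 + (1) * ((x : Mat4) (Sum.inl 0) (Sum.inr 1)) * xA1 * yA3 + (2) * ((x : Mat4) (Sum.inl 0) (Sum.inr 1)) * xA1 * yA3 * yD3 + (4) * ((x : Mat4) (Sum.inl 0) (Sum.inr 1)) * xA1 * yB1 * yC3 + (1) * ((x : Mat4) (Sum.inl 0)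 (Sum.inr 1)) * xA1 * yD3 + (1) * ((x : Mat4) (Sum.inl 0) (Sum.inr 1)) * xB0 * yC1 + (2) * ((x : Mat4) (Sum.inl 0) (Sum.inr 1)) * xB0 * yC1 * yD3 + (4) * ((x : Mat4) (Sum.inl 0) (Sum.inr 1)) * xB0 * yC3 * yD1 + (1) * ((x : Mat4) (Sum.inl 0) (Sum.inr 1)) * yA1 * yD3 + (2) * ((y : Mat4) (Sum.inl 0) (Sum.inr 1)) * xA0 * xA0 * yA1 + (1) * ((y : Mat4) (Sum.inl 0) (Sum.inr 1)) * xA0 * xA1 + (2) * ((y : Mat4) (Sum.inl 0) (Sum.inr 1)) * xA0 * xA1 * yA3 + (2) * ((y : Mat4) (Sum.inl 0) (Sum.inr 1)) * xA0 * xB0 * yC1 + (2) * ((y : Mat4) (Sum.inl 0) (Sum.inr 1)) * xA0 * yA1 + (1) * ((y : Mat4) (Sum.inl 0) (Sum.inr 1)) * xA1 + (1) * ((y : Mat4) (Sum.inl 0) (Sum.inr 1)) * xA1 * yA3 + (1) * ((y : Mat4) (Sum.inl 0) (Sum.inr 1)) * xB0 * yC1 + (1) * T * xA1 + (4) * xA0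 * xA1 * yA1 * yB1 + (4) * xA0 * xB0 * yA1 * yD1 + (1) * xA0 * yB0 + (4) * xA1 * xA1 * yA3 * yB1 + (2) * xA1 * xA1 * yB1 + (4) * xA1 * xB0 * yA3 * yD1 + (4) * xA1 * xB0 * yB1 * yC1 + (2) * xA1 * xB0 * yD1 + (2) * xA1 * yA1 * yB1 + (4) * xB0 * xB0 * yC1 * yD1 + (2) * xB0 * yA1 * yD1 + (1) * xB0 * yD0, by ring⟩

lemma keyY {x y : Sp2} (hx : x ∈ GSet) (hy : y ∈ GSet) :
    (4 : ℤ) ∣ Yv (x * y) - Yv x - Yv y := by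
  obtain ⟨xA0, xA1, xA2, xA3, xB0, xB1, xC0, xC1, xC2, xC3, xD0, xD1, xD2, xD3, hxA0, hxA1, hxA2, hxA3, hxB0, hxB1, hxC0, hxC1, hxC2, hxC3, hxD0, hxD1, hxD2, hxD3⟩ := GP_elim hx
  obtain ⟨yA0, yA1, yA2, yA3, yB0, yB1, yC0, yC1, yC2, yC3, yD0, yD1, yD2, yD3, hyA0, hyA1, hyA2, hyA3, hyB0, hyB1, hyC0, hyC1, hyC2, hyC3, hyD0, hyD1, hyD2, hyD3⟩ := GP_elim hy
  obtain ⟨U, hU⟩ := sym1 hx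
  obtain ⟨S2, hS2⟩ := sym3 hy
  have hyd01 : ((y : Mat4) (Sum.inr 0) (Sum.inr 1)) = 4 * S2 - 2 * yA2 := by omega
  have hxb10 : ((x : Mat4) (Sum.inl 1) (Sum.inr 0)) = ((x : Mat4) (Sum.inl 0) (Sum.inr 1)) + 2 * U := by omega
  simp only [Yv, coe_mul_sp, mul_entry]
  simp only [hxA0, hxA1, hxA2, hxA3, hxB0, hxB1, hxC0, hxC1, hxC2, hxC3, hxD0, hxD1, hxD2, hxD3, hyA0, hyA1, hyA2, hyA3, hyB0, hyB1, hyC0, hyC1, hyC2, hyC3, hyD0, hyD2, hyD3, hyd01, hxb10]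
  exact ⟨(1) * ((x : Mat4) (Sum.inl 0) (Sum.inr 1)) * ((x : Mat4) (Sum.inl 0) (Sum.inr 1)) * yC0 + (2) * ((x : Mat4) (Sum.inl 0) (Sum.inr 1)) * ((x : Mat4) (Sum.inl 0) (Sum.inr 1)) * yC0 * yD3 + (2) * ((x : Mat4) (Sum.inl 0) (Sum.inr 1)) * ((y : Mat4) (Sum.inl 0) (Sum.inr 1)) * xA0 * yC0 + (1) * ((x : Mat4) (Sum.inl 0) (Sum.inr 1)) * ((y : Mat4) (Sum.inl 0) (Sum.inr 1)) * yC0 + (1) * ((x : Mat4) (Sum.inl 0) (Sum.inr 1)) * S2 + (8) * ((x : Mat4) (Sum.inl 0) (Sum.inr 1)) * S2 * xB0 * yC0 + (2) * ((x : Mat4) (Sum.inl 0) (Sum.inr 1)) * U * yC0 + (4) * ((x : Mat4) (Sum.inl 0) (Sum.inr 1)) * U * yC0 * yD3 + (4) * ((x : Mat4) (Sum.inl 0) (Sum.inr 1)) * xA1 * yB1 * yC0 + (1) * ((x : Mat4) (Sum.inl 0) (Sum.inr 1)) * xA2 * yA0 + (2) * ((x : Mat4) (Sum.inl 0) (Sum.inr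 1)) * xA2 * yA0 * yD3 + (1) * ((x : Mat4) (Sum.inl 0) (Sum.inr 1)) * xA2 * yD3 + (1) * ((x : Mat4) (Sum.inl 0) (Sum.inr 1)) * xA3 * yA2 + (2) * ((x : Mat4) (Sum.inl 0) (Sum.inr 1)) * xA3 * yA2 * yD3 + (-4) * ((x : Mat4) (Sum.inl 0) (Sum.inr 1)) * xB0 * yA2 * yC0 + (1) * ((x : Mat4) (Sum.inl 0) (Sum.inr 1)) * xB1 * yC2 + (2) * ((x : Mat4) (Sum.inl 0) (Sum.inr 1)) * xB1 * yC2 * yD3 + (1) * ((x : Mat4) (Sum.inl 0) (Sum.inr 1)) * yA2 * yD3 + (4) * ((y : Mat4) (Sum.inl 0) (Sum.inr 1)) * U * xA0 * yC0 + (2) * ((y : Mat4) (Sum.inl 0) (Sum.inr 1)) * U * yC0 + (1) * ((y : Mat4) (Sum.inl 0) (Sum.inr 1)) * xA0 * xA2 + (2) * ((y : Mat4) (Sum.inl 0) (Sum.inr 1)) * xA0 * xA2 * yA0 + (2) * ((y : Mat4) (Sum.inl 0) (Sum.inr 1)) * xA0 * xA3 * yA2 + (2) * ((y : Mat4) (Sum.inl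 0) (Sum.inr 1)) * xA0 * xB1 * yC2 + (1) * ((y : Mat4) (Sum.inl 0) (Sum.inr 1)) * xA0 * yA2 + (1) * ((y : Mat4) (Sum.inl 0) (Sum.inr 1)) * xA2 + (1) * ((y : Mat4) (Sum.inl 0) (Sum.inr 1)) * xA2 * yA0 + (1) * ((y : Mat4) (Sum.inl 0) (Sum.inr 1)) * xA3 * yA2 + (1) * ((y : Mat4) (Sum.inl 0) (Sum.inr 1)) * xB1 * yC2 + (2) * S2 * U + (16) * S2 * U * xB0 * yC0 + (4) * S2 * xA2 * xB0 + (8) * S2 * xA2 * xB0 * yA0 + (8) * S2 * xA3 * xB0 * yA2 + (8) * S2 * xB0 * xB1 * yC2 + (4) * S2 * xB0 * yA2 + (8) * U * xA1 * yB1 * yC0 + (-8) * U * xB0 * yA2 * yC0 + (-1) * U * yA2 + (4) * xA1 * xA2 * yA0 * yB1 + (2) * xA1 * xA2 * yB1 + (4) * xA1 * xA3 * yA2 * yB1 + (4) * xA1 * xB1 * yB1 * yC2 + (2) * xA1 * yA2 * yB1 + (-4) * xA2 * xB0 * yA0 * yA2 + (-2) * xA2 * xB0 * yA2 + (-4) *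 xA3 * xB0 * yA2 * yA2 + (1) * xA3 * yB1 + (-4) * xB0 * xB1 * yA2 * yC2 + (-2) * xB0 * yA2 * yA2 + (1) * xB1 * yD3, by ring⟩

lemma keyZ {x y : Sp2} (hx : x ∈ GSet) (hy : y ∈ GSet) :
    (2 : ℤ) ∣ Zv (x * y) - Zv x - Zv y := by
  obtain ⟨xA0, xA1, xA2, xA3, xB0, xB1, xC0, xC1, xC2, xC3, xD0, xD1, xD2, xD3, hxA0, hxA1, hxA2, hxA3, hxB0, hxB1, hxC0, hxC1, hxC2, hxC3, hxD0, hxD1, hxD2, hxD3⟩ := GP_elim hx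
  obtain ⟨yA0, yA1, yA2, yA3, yB0, yB1, yC0, yC1, yC2, yC3, yD0, yD1, yD2, yD3, hyA0, hyA1, hyA2, hyA3, hyB0, hyB1, hyC0, hyC1, hyC2, hyC3, hyD0, hyD1, hyD2, hyD3⟩ := GP_elim hy
  simp only [Zv, coe_mul_sp, mul_entry]
  simp only [hxA0, hxA1, hxA2, hxA3, hxB0, hxB1, hxC0, hxC1, hxC2, hxC3, hxD0, hxD1, hxD2, hxD3, hyA0, hyA1, hyA2, hyA3, hyB0, hyB1, hyC0, hyC1, hyC2, hyC3, hyD0, hyD1, hyD2, hyD3]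
  exact ⟨(1) * ((x : Mat4) (Sum.inl 0) (Sum.inr 1)) * yD3 + (1) * ((y : Mat4) (Sum.inl 0) (Sum.inr 1)) * xA0 + (2) * xA1 * yB1 + (2) * xB0 * yD1, by ring⟩

lemma half_cast_add {x y z : ℤ} (hx : 2 ∣ x) (hy : 2 ∣ y) (h : 4 ∣ z - x - y) :
    ((z / 2 : ℤ) : ZMod 2) = ((x / 2 : ℤ) : ZMod 2) + ((y / 2 : ℤ) : ZMod 2) := by
  obtain ⟨a, rfl⟩ := hx
  obtain ⟨b, rfl⟩ := hy
  obtain ⟨c, hc⟩ := h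
  have hz : z = 2 * (a + b + 2 * c) := by linarith
  rw [hz, Int.mul_ediv_cancel_left _ two_ne_zero, Int.mul_ediv_cancel_left _ two_ne_zero,
    Int.mul_ediv_cancel_left _ two_ne_zero]
  push_cast
  have h2 : (2 : ZMod 2) = 0 := rfl
  rw [h2]
  ring

lemma cast_add_of_dvd {x y z : ℤ} (h : 2 ∣ z - x - y) :
    ((z : ℤ) : ZMod 2) = ((x : ℤ) : ZMod 2) + ((y : ℤ) : ZMod 2) := by
  have h0 := (ZMod.intCast_zmod_eq_zero_iff_dvd (z - x - y) 2).mpr h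
  push_cast at h0
  linear_combination h0

def phi : GG →* Multiplicative (ZMod 2 × ZMod 2 × ZMod 2) :=
  MonoidHom.mk'
    (fun g => Multiplicative.ofAdd
      (((Xv ↑g / 2 : ℤ) : ZMod 2), ((Yv ↑g / 2 : ℤ) : ZMod 2), ((Zv ↑g : ℤ) : ZMod 2)))
    (by
      intro g h
      rw [← ofAdd_add]
      refine congrArg Multiplicative.ofAdd ?_
      have hg := g.2
      have hh := h.2
      refine Prod.ext ?_ (Prod.ext ?_ ?_)
      · exact half_cast_add (Xv_even hg) (Xv_even hh) (keyX hg hh)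
      · exact half_cast_add (Yv_even hg) (Yv_even hh) (keyY hg hh)
      · exact cast_add_of_dvd (keyZ hg hh))

lemma phi_apply (g : GG) :
    phi g = Multiplicative.ofAdd
      (((Xv ↑g / 2 : ℤ) : ZMod 2), ((Yv ↑g / 2 : ℤ) : ZMod 2), ((Zv ↑g : ℤ) : ZMod 2)) := rfl

lemma mem_ker_iff (g : GG) :
    g ∈ phi.ker ↔ ((4 : ℤ) ∣ Xv ↑g ∧ (4 : ℤ) ∣ Yv ↑g ∧ (2 : ℤ) ∣ Zv ↑g) := by
  have hx2 := Xv_even g.2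
  have hy2 := Yv_even g.2
  rw [MonoidHom.mem_ker, phi_apply]
  rw [show (1 : Multiplicative (ZMod 2 × ZMod 2 × ZMod 2)) = Multiplicative.ofAdd 0 from rfl]
  rw [Multiplicative.ofAdd.injective.eq_iff]
  rw [Prod.ext_iff, Prod.ext_iff]
  simp only [Prod.fst, Prod.snd]
  constructor
  · rintro ⟨h1, h2, h3⟩
    have d1 := (ZMod.intCast_zmod_eq_zero_iff_dvd _ 2).mp h1
    have d2 := (ZMod.intCast_zmod_eq_zero_iff_dvd _ 2).mp h2
    have d3 := (ZMod.intCast_zmod_eq_zero_iff_dvd _ 2).mp h3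
    refine ⟨by omega, by omega, d3⟩
  · rintro ⟨h1, h2, h3⟩
    refine ⟨(ZMod.intCast_zmod_eq_zero_iff_dvd _ 2).mpr (by omega),
      (ZMod.intCast_zmod_eq_zero_iff_dvd _ 2).mpr (by omega),
      (ZMod.intCast_zmod_eq_zero_iff_dvd _ 2).mpr h3⟩

lemma HSet_sub {x : Sp2} (hx : x ∈ HSet) : x ∈ GSet := by
  obtain ⟨h1, h2, h3⟩ := hx
  refine ⟨?_, ?_, ?_, ?_, ?_⟩
  · intro i j
    have h := h1 (Sum.inl i) (Sum.inl j)
    rw [one4_ll] at h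
    exact h
  · intro i j
    have h := h1 (Sum.inr i) (Sum.inr j)
    rw [one4_rr] at h
    exact h
  · intro i j
    have h := h1 (Sum.inr i) (Sum.inl j)
    rw [one4_rl, sub_zero] at h
    exact h
  · exact fun i => (h2 i).mul_left 2
  · exact h3

lemma mem_HSet_iff {x : Sp2} (hx : x ∈ GSet) :
    x ∈ HSet ↔ ((4 : ℤ) ∣ Xv x ∧ (4 : ℤ) ∣ Yv x ∧ (2 : ℤ) ∣ Zv x) := by
  obtain ⟨xA0, xA1, xA2, xA3, xB0, xB1, xC0, xC1, xC2, xC3, xD0, xD1, xD2, xD3, hxA0, hxA1, hxA2, hxA3, hxB0, hxB1, hxC0, hxC1, hxC2, hxC3, hxD0, hxD1, hxD2, hxD3⟩ := GP_elim hx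
  obtain ⟨T, hT⟩ := sym1 hx
  have hXv : Xv x = ((x : Mat4) (Sum.inl 0) (Sum.inr 0)) + ((x : Mat4) (Sum.inl 0) (Sum.inl 1)) * ((x : Mat4) (Sum.inl 0) (Sum.inr 1)) := rfl
  have hYv : Yv x = ((x : Mat4) (Sum.inl 1) (Sum.inr 1)) + ((x : Mat4) (Sum.inl 1) (Sum.inl 0)) * ((x : Mat4) (Sum.inl 0) (Sum.inr 1)) := rfl
  have hZv : Zv x = ((x : Mat4) (Sum.inl 0) (Sum.inr 1)) := rfl
  constructor
  · rintro ⟨h1, h2, h3⟩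
    have hb01 := h1 (Sum.inl 0) (Sum.inr 1)
    rw [one4_lr, sub_zero] at hb01
    obtain ⟨W, hW⟩ := hb01
    have hXx : Xv x = ((x : Mat4) (Sum.inl 0) (Sum.inr 0)) + 4 * (xA1 * W) := by
      rw [hXv, hxA1, hW]; ring
    have hYx : Yv x = ((x : Mat4) (Sum.inl 1) (Sum.inr 1)) + 4 * (xA2 * W) := by
      rw [hYv, hxA2, hW]; ring
    obtain ⟨q0, hq0⟩ := h2 0
    obtain ⟨q1, hq1⟩ := h2 1
    refine ⟨⟨q0 + xA1 * W, by rw [hXx]; linarith⟩, ⟨q1 + xA2 * W, by rw [hYx]; linarith⟩,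
      ⟨W, by rw [hZv]; linarith⟩⟩
  · rintro ⟨h1, h2, h3⟩
    obtain ⟨W, hW⟩ := h3
    rw [hZv] at hW
    have hXx : Xv x = ((x : Mat4) (Sum.inl 0) (Sum.inr 0)) + 4 * (xA1 * W) := by
      rw [hXv, hxA1, hW]; ring
    have hYx : Yv x = ((x : Mat4) (Sum.inl 1) (Sum.inr 1)) + 4 * (xA2 * W) := by
      rw [hYv, hxA2, hW]; ring
    obtain ⟨q0, hq0⟩ := h1
    obtain ⟨q1, hq1⟩ := h2
    have hb00 : ((x : Mat4) (Sum.inl 0) (Sum.inr 0)) = 4 * (q0 - xA1 * W) := by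
      rw [hXx] at hq0; linarith
    have hb11 : ((x : Mat4) (Sum.inl 1) (Sum.inr 1)) = 4 * (q1 - xA2 * W) := by
      rw [hYx] at hq1; linarith
    obtain ⟨hGA, hGD, hGC, hGB2, hGC4⟩ := hx
    refine ⟨?_, ?_, ?_⟩
    · rintro (i | i) (j | j)
      · rw [one4_ll]
        exact hGA i j
      · rw [one4_lr, sub_zero]
        fin_cases i <;> fin_cases j <;> simp only [Fin.zero_eta, Fin.mk_one] <;> omega
      · rw [one4_rl, sub_zero]
        exact hGC i j
      · rw [one4_rr]
        exact hGD i j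
    · intro i
      fin_cases i <;> simp only [Fin.zero_eta, Fin.mk_one] <;> omega
    · exact hGC4

def HH : Subgroup Sp2 := phi.ker.map GG.subtype

lemma HH_coe : (HH : Set Sp2) = HSet := by
  ext x
  constructor
  · rintro ⟨g, hg, rfl⟩
    have := (mem_ker_iff g).mp hg
    exact (mem_HSet_iff g.2).mpr this
  · intro hx
    have hxG : x ∈ GSet := HSet_sub hx
    exact ⟨⟨x, hxG⟩, (mem_ker_iff ⟨x, hxG⟩).mpr ((mem_HSet_iff hxG).mp hx), rfl⟩

lemma ker_eq : phi.ker = HH.subgroupOf GG := by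
  ext g
  rw [Subgroup.mem_subgroupOf]
  constructor
  · intro hg
    exact ⟨g, hg, rfl⟩
  · rintro ⟨h, hh, heq⟩
    obtain rfl : h = g := Subtype.ext heq
    exact hh

def genB (u v w : ZMod 2) : Matrix (Fin 2) (Fin 2) ℤ :=
  !![2 * (u.val : ℤ), (w.val : ℤ); (w.val : ℤ), 2 * (v.val : ℤ)]

def genMat (u v w : ZMod 2) : Mat4 := Matrix.fromBlocks 1 (genB u v w) 0 1

lemma genB_symm (u v w : ZMod 2) : (genB u v w)ᵀ = genB u v w := by
  ext i j
  fin_cases i <;> fin_cases j <;> simp [genB]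

lemma genMat_mem (u v w : ZMod 2) : genMat u v w ∈ Matrix.symplecticGroup (Fin 2) ℤ := by
  rw [SymplecticGroup.mem_iff, genMat, Matrix.J, Matrix.fromBlocks_transpose,
    Matrix.fromBlocks_multiply, Matrix.fromBlocks_multiply]
  simp [genB_symm]

def genSp (u v w : ZMod 2) : Sp2 := ⟨genMat u v w, genMat_mem u v w⟩

lemma genSp_entry_ll (u v w : ZMod 2) (i j : Fin 2) :
    ((genSp u v w : Sp2) : Mat4) (Sum.inl i) (Sum.inl j) = (1 : Matrix (Fin 2) (Fin 2) ℤ) i j := rfl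

lemma genSp_entry_rr (u v w : ZMod 2) (i j : Fin 2) :
    ((genSp u v w : Sp2) : Mat4) (Sum.inr i) (Sum.inr j) = (1 : Matrix (Fin 2) (Fin 2) ℤ) i j := rfl

lemma genSp_entry_rl (u v w : ZMod 2) (i j : Fin 2) :
    ((genSp u v w : Sp2) : Mat4) (Sum.inr i) (Sum.inl j) = 0 := rfl

lemma genSp_entry_lr (u v w : ZMod 2) (i j : Fin 2) :
    ((genSp u v w : Sp2) : Mat4) (Sum.inl i) (Sum.inr j) = genB u v w i j := rfl

lemma genSp_mem (u v w : ZMod 2) : genSp u v w ∈ GG := by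
  refine ⟨?_, ?_, ?_, ?_, ?_⟩
  · intro i j
    rw [genSp_entry_ll]
    omega
  · intro i j
    rw [genSp_entry_rr]
    omega
  · intro i j
    rw [genSp_entry_rl]
    omega
  · intro i
    rw [genSp_entry_lr]
    fin_cases i <;> simp [genB] <;> omega
  · intro i
    rw [genSp_entry_rl]
    omega

lemma val_cast_zmod2 (u : ZMod 2) : (((u.val : ℤ) : ZMod 2)) = u := by
  push_cast
  simp [ZMod.natCast_val, ZMod.cast_id]

lemma phi_genSp (u v w : ZMod 2) :
    phi ⟨genSp u v w, genSp_mem u v w⟩ = Multiplicative.ofAdd (u, v, w) := by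
  rw [phi_apply]
  congr 1
  have hX : Xv (genSp u v w) = 2 * (u.val : ℤ) := by
    show genB u v w 0 0 + (1 : Matrix (Fin 2) (Fin 2) ℤ) 0 1 * genB u v w 0 1 = _
    norm_num [Matrix.one_apply, genB]
  have hY : Yv (genSp u v w) = 2 * (v.val : ℤ) := by
    show genB u v w 1 1 + (1 : Matrix (Fin 2) (Fin 2) ℤ) 1 0 * genB u v w 0 1 = _
    norm_num [Matrix.one_apply, genB]
  have hZ : Zv (genSp u v w) = (w.val : ℤ) := by
    show genB u v w 0 1 = _
    norm_num [genB]
  rw [hX, hY, hZ]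
  rw [Int.mul_ediv_cancel_left _ two_ne_zero, Int.mul_ediv_cancel_left _ two_ne_zero]
  exact Prod.ext (val_cast_zmod2 u) (Prod.ext (val_cast_zmod2 v) (val_cast_zmod2 w))

lemma phi_surj : Function.Surjective phi := by
  intro t
  obtain ⟨⟨u, v, w⟩, rfl⟩ : ∃ p : ZMod 2 × ZMod 2 × ZMod 2, Multiplicative.ofAdd p = t :=
    ⟨Multiplicative.toAdd t, rfl⟩
  exact ⟨⟨genSp u v w, genSp_mem u v w⟩, phi_genSp u v w⟩

/-- Γ₂²(2,4)/Γ₂(2,4) ≅ (ℤ/2)³; in particular Γ₂(2,4) has index 8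
in Γ₂²(2,4). Formalized via a surjective homomorphism G →* (ℤ/2)³ with kernel H. -/
theorem quotient_gamma2sup_by_gamma2_is_Z2_cubed :
    ∃ G H : Subgroup (Matrix.symplecticGroup (Fin 2) ℤ),
      ((G : Set (Matrix.symplecticGroup (Fin 2) ℤ)) =
        {γ : Matrix.symplecticGroup (Fin 2) ℤ |
          (∀ i j : Fin 2, (2 : ℤ) ∣
            ((γ : Matrix (Fin 2 ⊕ Fin 2) (Fin 2 ⊕ Fin 2) ℤ) (Sum.inl i) (Sum.inl j)
              - (1 : Matrix (Fin 2) (Fin 2) ℤ) i j)) ∧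
          (∀ i j : Fin 2, (2 : ℤ) ∣
            ((γ : Matrix (Fin 2 ⊕ Fin 2) (Fin 2 ⊕ Fin 2) ℤ) (Sum.inr i) (Sum.inr j)
              - (1 : Matrix (Fin 2) (Fin 2) ℤ) i j)) ∧
          (∀ i j : Fin 2, (2 : ℤ) ∣
            (γ : Matrix (Fin 2 ⊕ Fin 2) (Fin 2 ⊕ Fin 2) ℤ) (Sum.inr i) (Sum.inl j)) ∧
          (∀ i : Fin 2, (4 : ℤ) ∣
            2 * (γ : Matrix (Fin 2 ⊕ Fin 2) (Fin 2 ⊕ Fin 2) ℤ) (Sum.inl i) (Sum.inr i)) ∧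
          (∀ i : Fin 2, (4 : ℤ) ∣
            (γ : Matrix (Fin 2 ⊕ Fin 2) (Fin 2 ⊕ Fin 2) ℤ) (Sum.inr i) (Sum.inl i))}) ∧
      ((H : Set (Matrix.symplecticGroup (Fin 2) ℤ)) =
        {γ : Matrix.symplecticGroup (Fin 2) ℤ |
          (∀ i j, (2 : ℤ) ∣
            ((γ : Matrix (Fin 2 ⊕ Fin 2) (Fin 2 ⊕ Fin 2) ℤ) i j
              - (1 : Matrix (Fin 2 ⊕ Fin 2) (Fin 2 ⊕ Fin 2) ℤ) i j)) ∧
          (∀ i : Fin 2, (4 : ℤ) ∣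
            (γ : Matrix (Fin 2 ⊕ Fin 2) (Fin 2 ⊕ Fin 2) ℤ) (Sum.inl i) (Sum.inr i)) ∧
          (∀ i : Fin 2, (4 : ℤ) ∣
            (γ : Matrix (Fin 2 ⊕ Fin 2) (Fin 2 ⊕ Fin 2) ℤ) (Sum.inr i) (Sum.inl i))}) ∧
      H ≤ G ∧
      (∃ φ : G →* Multiplicative (ZMod 2 × ZMod 2 × ZMod 2),
        Function.Surjective φ ∧ φ.ker = H.subgroupOf G) ∧
      (H.subgroupOf G).index = 8 := by
  refine ⟨GG, HH, rfl, HH_coe, Subgroup.map_subtype_le phi.ker, ⟨phi, phi_surj, ker_eq⟩, ?_⟩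
  rw [← ker_eq, Subgroup.index_ker, MonoidHom.range_eq_top.mpr phi_surj]
  rw [Subgroup.card_top, Nat.card_eq_fintype_card]
  rfl
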